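/- arXiv:2303.05751 — 2 statements merged into one kernel-verified Lean document; each statement's English description precedes it below -/
import Mathlib

section
/- Fix n ≥ 2 and 1 ≤ t ≤ n−1. Let f : 2^[n] → ℝ be supermodular with s = Tf, and suppose s_{I,J} = 0 for every close pair {I,J} with |I| ≠ t. Then s_{I,J} takes the same value on all close pairs {I,J} with |I| = t; consequently f is equivalent to c·α_{n,t} for some c ≥ 0, where α_{n,t}(I) = max(0, |I| − t). -/
/-- A function on subsets of `[n]` is supermodular if
`f (I ∩ J) + f (I ∪ J) ≥ f I + f J` for all `I, J`. -/
def Supermodular {n : ℕ} (f : Finset (Fin n) → ℝ) : Prop :=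
  ∀ I J : Finset (Fin n), f I + f J ≤ f (I ∩ J) + f (I ∪ J)

/-- A function on subsets of `[n]` is modular if
`f (I ∩ J) + f (I ∪ J) = f I + f J` for all `I, J`. -/
def Modular {n : ℕ} (f : Finset (Fin n) → ℝ) : Prop :=
  ∀ I J : Finset (Fin n), f (I ∩ J) + f (I ∪ J) = f I + f J

/-- A pair `{I, J}` of subsets of `[n]` is close if
`|I| = |J| = |I ∩ J| + 1 = |I ∪ J| − 1`. -/
def ClosePair {n : ℕ} (I J : Finset (Fin n)) : Prop :=
  I.card = J.card ∧ I.card = (I ∩ J).card + 1 ∧ I.card + 1 = (I ∪ J).card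

/-- The supermodularity value `s_{I,J}` of the pair `{I, J}` for the function `f`. -/
def sval {n : ℕ} (f : Finset (Fin n) → ℝ) (I J : Finset (Fin n)) : ℝ :=
  f (I ∩ J) + f (I ∪ J) - f I - f J

/-- The standard supermodular function `α_{n,t}(I) = max (0, |I| − t)` (it corresponds
to the hypersimplex `Δ_{n,n−t}`). -/
def alphaFun (n t : ℕ) (I : Finset (Fin n)) : ℝ :=
  max 0 ((I.card : ℝ) - (t : ℝ))

namespace OneLayerAux

variable {n t : ℕ}

def dval (f : Finset (Fin n) → ℝ) (S : Finset (Fin n)) (i j : Fin n) : ℝ :=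
  f S + f (insert i (insert j S)) - f (insert i S) - f (insert j S)

lemma inter_insert {S : Finset (Fin n)} {i j : Fin n} (hi : i ∉ S) (hj : j ∉ S)
    (hij : i ≠ j) : (insert i S) ∩ (insert j S) = S := by
  ext x
  simp only [Finset.mem_inter, Finset.mem_insert]
  constructor
  · rintro ⟨hx1 | hx1, hx2 | hx2⟩ <;> first
      | assumption
      | (exfalso; subst hx1; exact hij hx2)
      | (exfalso; subst hx1; exact hi hx2)
      | (exfalso; subst hx2; exact hj hx1)
  · intro hx; exact ⟨Or.inr hx, Or.inr hx⟩

lemma union_insert (S : Finset (Fin n)) (i j : Fin n) :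
    (insert i S) ∪ (insert j S) = insert i (insert j S) := by
  ext x; simp [Finset.mem_union, Finset.mem_insert]; tauto

lemma closePair_insert {S : Finset (Fin n)} {i j : Fin n} (hi : i ∉ S) (hj : j ∉ S)
    (hij : i ≠ j) : ClosePair (insert i S) (insert j S) := by
  have hiS : i ∉ insert j S := by simp [Finset.mem_insert, hij, hi]
  refine ⟨?_, ?_, ?_⟩
  · rw [Finset.card_insert_of_notMem hi, Finset.card_insert_of_notMem hj]
  · rw [inter_insert hi hj hij, Finset.card_insert_of_notMem hi]
  · rw [union_insert, Finset.card_insert_of_notMem hi, Finset.card_insert_of_notMem hiS,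
      Finset.card_insert_of_notMem hj]

lemma sval_insert (f : Finset (Fin n) → ℝ) {S : Finset (Fin n)} {i j : Fin n}
    (hi : i ∉ S) (hj : j ∉ S) (hij : i ≠ j) :
    sval f (insert i S) (insert j S) = dval f S i j := by
  rw [sval, inter_insert hi hj hij, union_insert, dval]

lemma dval_symm (f : Finset (Fin n) → ℝ) (S : Finset (Fin n)) (i j : Fin n) :
    dval f S i j = dval f S j i := by
  unfold dval; rw [Finset.insert_comm i j]; ring

lemma dval_ident (f : Finset (Fin n) → ℝ) (S : Finset (Fin n)) (i j k : Fin n) :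
    dval f S i j + dval f (insert j S) i k = dval f S i k + dval f (insert k S) i j := by
  unfold dval
  rw [Finset.insert_comm k j S]
  ring

section
variable {f : Finset (Fin n) → ℝ}
variable (hv : ∀ (S : Finset (Fin n)) (i j : Fin n),
  i ∉ S → j ∉ S → i ≠ j → S.card + 1 ≠ t → dval f S i j = 0)

include hv

lemma stepA {S : Finset (Fin n)} {i j k : Fin n} (hSc : S.card + 2 ≠ t)
    (hi : i ∉ S) (hj : j ∉ S) (hk : k ∉ S)
    (hij : i ≠ j) (hik : i ≠ k) (hjk : j ≠ k) : dval f S i j = dval f S i k := by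
  have hid := dval_ident f S i j k
  have h1 : dval f (insert j S) i k = 0 := by
    apply hv
    · simp [Finset.mem_insert, hij, hi]
    · simp [Finset.mem_insert, hjk.symm, hk]
    · exact hik
    · rw [Finset.card_insert_of_notMem hj]; omega
  have h2 : dval f (insert k S) i j = 0 := by
    apply hv
    · simp [Finset.mem_insert, hik, hi]
    · simp [Finset.mem_insert, hjk, hj]
    · exact hij
    · rw [Finset.card_insert_of_notMem hk]; omega
  linarith

lemma dpair {S : Finset (Fin n)} {i j k l : Fin n} (hSc : S.card + 2 ≠ t) (hi : i ∉ S) (hj : j ∉ S)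
    (hk : k ∉ S) (hl : l ∉ S) (hij : i ≠ j) (hkl : k ≠ l) :
    dval f S i j = dval f S k l := by
  by_cases hik : i = k
  · subst hik
    by_cases hjl : j = l
    · subst hjl; rfl
    · exact stepA hv hSc hi hj hl hij hkl hjl
  · by_cases hil : i = l
    · subst hil
      rw [dval_symm f S k i]
      by_cases hjk : j = k
      · subst hjk; rfl
      · exact stepA hv hSc hi hj hk hij (fun h => hik h) hjk
    · by_cases hjk : j = k
      · subst hjk
        rw [dval_symm f S i j]
        exact stepA hv hSc hj hi hl (Ne.symm hij) hkl hil
      · calc dval f S i j = dval f S i k := stepA hv hSc hi hj hk hij hik (fun h => hjk h)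
          _ = dval f S k i := dval_symm f S i k
          _ = dval f S k l := stepA hv hSc hk hi hl (fun h => hik h.symm) hkl hil

lemma swap {R : Finset (Fin n)} {i a b : Fin n} (hiR : i ∉ R) (haR : a ∉ R) (hbR : b ∉ R)
    (hia : i ≠ a) (hib : i ≠ b) (hab : a ≠ b) (hcard : R.card + 1 ≠ t) :
    dval f (insert a R) i b = dval f (insert b R) i a := by
  have hid := dval_ident f R i a b
  have h1 : dval f R i a = 0 := hv R i a hiR haR hia hcard
  have h2 : dval f R i b = 0 := hv R i b hiR hbR hib hcard
  linarith

lemma const_aux (htn' : t + 1 ≤ n) :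
    ∀ k : ℕ, ∀ S S' : Finset (Fin n), ∀ i j i' j' : Fin n,
      (S' \ S).card = k → S.card + 1 = t → S'.card + 1 = t →
      i ∉ S → j ∉ S → i ≠ j → i' ∉ S' → j' ∉ S' → i' ≠ j' →
      dval f S i j = dval f S' i' j' := by
  intro k
  induction k using Nat.strong_induction_on with
  | _ k IH =>
    intro S S' i j i' j' hk hS hS' hi hj hij hi' hj' hij'
    rcases Nat.eq_zero_or_pos k with hk0 | hkpos
    · -- S' ⊆ S hence S' = S
      have hsub : S' ⊆ S := by
        rw [← Finset.sdiff_eq_empty_iff_subset]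
        exact Finset.card_eq_zero.mp (by omega)
      have hSS : S' = S := Finset.eq_of_subset_of_card_le hsub (by omega)
      subst hSS
      exact dpair hv (by omega) hi hj hi' hj' hij hij'
    · -- pick b ∈ S' \ S and a ∈ S \ S'
      have hbne : (S' \ S).Nonempty := Finset.card_pos.mp (by omega)
      obtain ⟨b, hb⟩ := hbne
      have hbS' : b ∈ S' := (Finset.mem_sdiff.mp hb).1
      have hbS : b ∉ S := (Finset.mem_sdiff.mp hb).2
      have hane : (S \ S').Nonempty := by
        apply Finset.card_pos.mp
        rw [Finset.card_sdiff_comm (by omega)]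
        omega
      obtain ⟨a, ha⟩ := hane
      have haS : a ∈ S := (Finset.mem_sdiff.mp ha).1
      have haS' : a ∉ S' := (Finset.mem_sdiff.mp ha).2
      -- fresh element i₁ ∉ insert b S
      have hcard_ins : (insert b S).card < n := by
        rw [Finset.card_insert_of_notMem hbS]; omega
      have hfresh : ∃ i₁ : Fin n, i₁ ∉ insert b S := by
        by_contra hcon
        push_neg at hcon
        have : (Finset.univ : Finset (Fin n)) ⊆ insert b S := fun x _ => hcon x
        have := Finset.card_le_card this
        simp [Finset.card_univ] at this
        omega
      obtain ⟨i₁, hi₁⟩ := hfresh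
      have hi₁S : i₁ ∉ S := fun h => hi₁ (Finset.mem_insert_of_mem h)
      have hi₁b : i₁ ≠ b := fun h => hi₁ (h ▸ Finset.mem_insert_self b S)
      have hi₁a : i₁ ≠ a := fun h => hi₁S (h ▸ haS)
      have hab : a ≠ b := fun h => hbS (h ▸ haS)
      have hSpos : 1 ≤ S.card := Finset.card_pos.mpr ⟨a, haS⟩
      set R := S.erase a with hR
      have hRcard : R.card + 1 = S.card := by
        rw [hR, Finset.card_erase_of_mem haS]; omega
      have haR : a ∉ R := Finset.notMem_erase a S
      have hbR : b ∉ R := fun h => hbS (Finset.mem_of_mem_erase h)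
      have hi₁R : i₁ ∉ R := fun h => hi₁S (Finset.mem_of_mem_erase h)
      have hSins : insert a R = S := Finset.insert_erase haS
      set S'' := insert b R with hS''
      -- step 1 : dval f S i j = dval f S i₁ b
      have h1 : dval f S i j = dval f S i₁ b :=
        dpair hv (by omega) hi hj hi₁S hbS hij hi₁b
      -- step 2 : dval f S i₁ b = dval f S'' i₁ a
      have h2 : dval f S i₁ b = dval f S'' i₁ a := by
        rw [← hSins]
        exact swap hv hi₁R haR hbR hi₁a hi₁b hab (by omega)
      -- step 3 : IH
      have hS''card : S''.card + 1 = t := by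
        rw [hS'', Finset.card_insert_of_notMem hbR]; omega
      have hsd : S' \ S'' = (S' \ S).erase b := by
        rw [hS'', Finset.sdiff_insert]
        congr 1
        ext x
        simp only [Finset.mem_sdiff, hR, Finset.mem_erase]
        constructor
        · rintro ⟨hx1, hx2⟩
          refine ⟨hx1, fun hxS => hx2 ⟨fun hxa => haS' (hxa ▸ hx1), hxS⟩⟩
        · rintro ⟨hx1, hx2⟩
          exact ⟨hx1, fun hxe => hx2 hxe.2⟩
      have hsdcard : (S' \ S'').card = k - 1 := by
        rw [hsd, Finset.card_erase_of_mem hb, hk]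
      have hi₁S'' : i₁ ∉ S'' := by
        rw [hS'']
        simp only [Finset.mem_insert]
        rintro (h | h)
        · exact hi₁b h
        · exact hi₁R h
      have haS'' : a ∉ S'' := by
        rw [hS'']
        simp only [Finset.mem_insert]
        rintro (h | h)
        · exact hab h
        · exact haR h
      have h3 : dval f S'' i₁ a = dval f S' i' j' :=
        IH (k - 1) (by omega) S'' S' i₁ a i' j' hsdcard hS''card hS'
          hi₁S'' haS'' hi₁a hi' hj' hij'
      rw [h1, h2, h3]

end

lemma dval_alpha {S : Finset (Fin n)} {i j : Fin n} (hi : i ∉ S) (hj : j ∉ S)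
    (hij : i ≠ j) :
    dval (alphaFun n t) S i j = if S.card + 1 = t then 1 else 0 := by
  have hiS : i ∉ insert j S := by simp [Finset.mem_insert, hij, hi]
  have c1 : ((insert i S).card : ℝ) = S.card + 1 := by
    rw [Finset.card_insert_of_notMem hi]; push_cast; ring
  have c2 : ((insert j S).card : ℝ) = S.card + 1 := by
    rw [Finset.card_insert_of_notMem hj]; push_cast; ring
  have c3 : ((insert i (insert j S)).card : ℝ) = S.card + 2 := by
    rw [Finset.card_insert_of_notMem hiS, Finset.card_insert_of_notMem hj]
    push_cast; ring
  unfold dval alphaFun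
  rw [c1, c2, c3]
  have hm := S.card
  rcases lt_trichotomy (S.card + 1) t with h | h | h
  · rw [if_neg (by omega)]
    have e1 : ((S.card : ℝ) - t) ≤ 0 := by
      have : (S.card : ℝ) + 1 ≤ t := by exact_mod_cast Nat.le_of_lt h
      linarith
    have e2 : ((S.card : ℝ) + 1 - t) ≤ 0 := by
      have : (S.card : ℝ) + 1 ≤ t := by exact_mod_cast Nat.le_of_lt h
      linarith
    have e3 : ((S.card : ℝ) + 2 - t) ≤ 0 := by
      have : (S.card : ℝ) + 2 ≤ t := by exact_mod_cast h
      linarith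
    rw [max_eq_left e1, max_eq_left e2, max_eq_left e3]
    ring
  · rw [if_pos h]
    have ht' : (t : ℝ) = (S.card : ℝ) + 1 := by exact_mod_cast h.symm
    rw [ht']
    rw [max_eq_left (by linarith : (S.card:ℝ) - ((S.card:ℝ)+1) ≤ 0),
      max_eq_right (by linarith : (0:ℝ) ≤ (S.card:ℝ) + 2 - ((S.card:ℝ)+1)),
      max_eq_left (by linarith : (S.card:ℝ) + 1 - ((S.card:ℝ)+1) ≤ 0)]
    ring
  · rw [if_neg (by omega)]
    have ht' : (t : ℝ) ≤ (S.card : ℝ) := by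
      have : t ≤ S.card := by omega
      exact_mod_cast this
    rw [max_eq_right (by linarith), max_eq_right (by linarith),
      max_eq_right (by linarith)]
    ring

section modular
variable {g : Finset (Fin n) → ℝ}
variable (h0 : ∀ (S : Finset (Fin n)) (i j : Fin n),
  i ∉ S → j ∉ S → i ≠ j → dval g S i j = 0)

include h0

lemma marg : ∀ S : Finset (Fin n), ∀ i : Fin n, i ∉ S →
    g (insert i S) = g S + (g {i} - g ∅) := by
  intro S
  induction S using Finset.induction_on with
  | empty => intro i _; simp
  | insert a s ha IH =>
    intro i hi
    have hia : i ≠ a := fun h => hi (h ▸ Finset.mem_insert_self a s)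
    have his : i ∉ s := fun h => hi (Finset.mem_insert_of_mem h)
    have hd := h0 s i a his ha hia
    unfold dval at hd
    have hIH := IH i his
    have : g (insert i (insert a s)) = g (insert a s) + (g (insert i s) - g s) := by
      linarith
    rw [this, hIH]
    ring

lemma repr_sum : ∀ S : Finset (Fin n),
    g S = g ∅ + ∑ x ∈ S, (g {x} - g ∅) := by
  intro S
  induction S using Finset.induction_on with
  | empty => simp
  | insert a s ha IH =>
    rw [marg h0 s a ha, Finset.sum_insert ha, IH]
    ring

lemma modular_of_dval : Modular g := by
  intro I J
  rw [repr_sum h0 I, repr_sum h0 J, repr_sum h0 (I ∩ J), repr_sum h0 (I ∪ J)]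
  have := Finset.sum_union_inter (s₁ := I) (s₂ := J) (f := fun x => g {x} - g ∅)
  linarith

end modular

lemma closePair_decomp {I J : Finset (Fin n)} (h : ClosePair I J) :
    ∃ (S : Finset (Fin n)) (i j : Fin n), i ∉ S ∧ j ∉ S ∧ i ≠ j ∧
      I = insert i S ∧ J = insert j S := by
  obtain ⟨hcard, hint, huni⟩ := h
  set S := I ∩ J with hS
  have hSI : S ⊆ I := Finset.inter_subset_left
  have hSJ : S ⊆ J := Finset.inter_subset_right
  have hI1 : (I \ S).card = 1 := by
    rw [Finset.card_sdiff_of_subset hSI]; omega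
  have hJ1 : (J \ S).card = 1 := by
    rw [Finset.card_sdiff_of_subset hSJ]; omega
  obtain ⟨i, hi⟩ := Finset.card_eq_one.mp hI1
  obtain ⟨j, hj⟩ := Finset.card_eq_one.mp hJ1
  have hiI : i ∈ I := (Finset.mem_sdiff.mp (hi ▸ Finset.mem_singleton_self i)).1
  have hiS : i ∉ S := (Finset.mem_sdiff.mp (hi ▸ Finset.mem_singleton_self i)).2
  have hjJ : j ∈ J := (Finset.mem_sdiff.mp (hj ▸ Finset.mem_singleton_self j)).1
  have hjS : j ∉ S := (Finset.mem_sdiff.mp (hj ▸ Finset.mem_singleton_self j)).2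
  have hIeq : I = insert i S := by
    ext x
    simp only [Finset.mem_insert]
    constructor
    · intro hx
      by_cases hxS : x ∈ S
      · exact Or.inr hxS
      · left
        have : x ∈ I \ S := Finset.mem_sdiff.mpr ⟨hx, hxS⟩
        rw [hi] at this
        exact Finset.mem_singleton.mp this
    · rintro (rfl | hx)
      · exact hiI
      · exact hSI hx
  have hJeq : J = insert j S := by
    ext x
    simp only [Finset.mem_insert]
    constructor
    · intro hx
      by_cases hxS : x ∈ S
      · exact Or.inr hxS
      · left
        have : x ∈ J \ S := Finset.mem_sdiff.mpr ⟨hx, hxS⟩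
        rw [hj] at this
        exact Finset.mem_singleton.mp this
    · rintro (rfl | hx)
      · exact hjJ
      · exact hSJ hx
  have hij : i ≠ j := by
    intro hij
    subst hij
    have : I = J := by rw [hIeq, hJeq]
    rw [this] at huni
    simp only [Finset.union_self] at huni
    omega
  exact ⟨S, i, j, hiS, hjS, hij, hIeq, hJeq⟩

end OneLayerAux

open OneLayerAux

/-- Let `f` be supermodular on `2^[n]` with supermodularity values vanishing on every
close pair `{I,J}` with `|I| ≠ t`.  Then the supermodularity value is constant over
the close pairs with `|I| = t`; consequently `f` differs from `c • α_{n,t}`, for some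
`c ≥ 0`, by a modular function. -/
theorem one_layer_supermodularities {n t : ℕ} (hn : 2 ≤ n) (ht : 1 ≤ t) (htn : t ≤ n - 1)
    (f : Finset (Fin n) → ℝ) (hf : Supermodular f)
    (hvanish : ∀ I J : Finset (Fin n), ClosePair I J → I.card ≠ t → sval f I J = 0) :
    (∀ I J I' J' : Finset (Fin n), ClosePair I J → ClosePair I' J' →
      I.card = t → I'.card = t → sval f I J = sval f I' J') ∧
    (∃ c : ℝ, 0 ≤ c ∧ Modular (f - c • alphaFun n t)) := by
  have htn' : t + 1 ≤ n := by omega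
  have hv : ∀ (S : Finset (Fin n)) (i j : Fin n),
      i ∉ S → j ∉ S → i ≠ j → S.card + 1 ≠ t → dval f S i j = 0 := by
    intro S i j hi hj hij hc
    rw [← sval_insert f hi hj hij]
    exact hvanish _ _ (closePair_insert hi hj hij)
      (by rw [Finset.card_insert_of_notMem hi]; exact hc)
  have hnn : ∀ (S : Finset (Fin n)) (i j : Fin n),
      i ∉ S → j ∉ S → i ≠ j → 0 ≤ dval f S i j := by
    intro S i j hi hj hij
    rw [← sval_insert f hi hj hij]
    have := hf (insert i S) (insert j S)
    unfold sval
    linarith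
  -- reference configuration
  have hle : t + 1 ≤ (Finset.univ : Finset (Fin n)).card := by
    rw [Finset.card_univ, Fintype.card_fin]; omega
  obtain ⟨T, _, hTcard⟩ := Finset.exists_subset_card_eq hle
  have hTne : T.Nonempty := Finset.card_pos.mp (by omega)
  obtain ⟨i₀, hi₀T⟩ := hTne
  have hT1 : (T.erase i₀).Nonempty := by
    apply Finset.card_pos.mp
    rw [Finset.card_erase_of_mem hi₀T]
    omega
  obtain ⟨j₀, hj₀T⟩ := hT1
  set S₀ := (T.erase i₀).erase j₀ with hS₀
  have hS₀card : S₀.card + 1 = t := by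
    rw [hS₀, Finset.card_erase_of_mem hj₀T, Finset.card_erase_of_mem hi₀T]
    omega
  have hij₀ : i₀ ≠ j₀ := fun h => (Finset.ne_of_mem_erase hj₀T) h.symm
  have hi₀ : i₀ ∉ S₀ := fun h =>
    Finset.notMem_erase i₀ T (Finset.mem_of_mem_erase h)
  have hj₀ : j₀ ∉ S₀ := Finset.notMem_erase j₀ _
  constructor
  · intro I J I' J' hIJ hI'J' hcI hcI'
    obtain ⟨S, i, j, hi, hj, hij, rfl, rfl⟩ := closePair_decomp hIJ
    obtain ⟨S', i', j', hi', hj', hij', rfl, rfl⟩ := closePair_decomp hI'J'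
    rw [sval_insert f hi hj hij, sval_insert f hi' hj' hij']
    rw [Finset.card_insert_of_notMem hi] at hcI
    rw [Finset.card_insert_of_notMem hi'] at hcI'
    exact const_aux hv htn' _ S S' i j i' j' rfl hcI hcI' hi hj hij hi' hj' hij'
  · refine ⟨dval f S₀ i₀ j₀, hnn S₀ i₀ j₀ hi₀ hj₀ hij₀, ?_⟩
    apply modular_of_dval
    intro S i j hi hj hij
    have expand : dval (f - dval f S₀ i₀ j₀ • alphaFun n t) S i j
        = dval f S i j - dval f S₀ i₀ j₀ * dval (alphaFun n t) S i j := by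
      unfold dval
      simp only [Pi.sub_apply, Pi.smul_apply, smul_eq_mul]
      ring
    rw [expand, dval_alpha hi hj hij]
    by_cases hS : S.card + 1 = t
    · rw [if_pos hS]
      have heq : dval f S i j = dval f S₀ i₀ j₀ :=
        const_aux hv htn' _ S S₀ i j i₀ j₀ rfl hS hS₀card hi hj hij hi₀ hj₀ hij₀
      rw [heq]; ring
    · rw [if_neg hS, hv S i j hi hj hij hS]; ring
end

section
/- Fix n ≥ 3, 1 ≤ t ≤ n−2, and ℓ ∈ [n]. Then the function γ_{n,t,ℓ} : 2^[n] → ℝ defined by γ_{n,t,ℓ}(I) = Σ_{k ∈ [n]∖{ℓ}} max(0, |I∖{k}| − t) − (n−t−2)·max(0, |I| − t) − (t−1)·max(0, |I| − t − 1) is supermodular. -/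
/-- `β_{n,t,k}(I) = max (0, |I∖{k}| − t)`. -/
def betaFun (n t : ℕ) (k : Fin n) (I : Finset (Fin n)) : ℝ :=
  max 0 (((I.erase k).card : ℝ) - (t : ℝ))

/-- `γ_{n,t,ℓ} = Σ_{k ≠ ℓ} β_{n,t,k} − (n−t−2)·α_{n,t} − (t−1)·α_{n,t+1}`. -/
def gammaFun (n t : ℕ) (ℓ : Fin n) (I : Finset (Fin n)) : ℝ :=
  (∑ k ∈ Finset.univ.erase ℓ, betaFun n t k I) -
    ((n : ℝ) - (t : ℝ) - 2) * alphaFun n t I - ((t : ℝ) - 1) * alphaFun n (t + 1) I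

lemma gamma_eq (n t : ℕ) (ℓ : Fin n) (I : Finset (Fin n)) :
    gammaFun n t ℓ I =
      max 0 ((I.card : ℝ) + (if ℓ ∈ I then 1 else 0) - (t : ℝ) - 1) := by
  classical
  set s := I.card with hs
  set A : ℝ := max 0 ((s : ℝ) - 1 - t) with hA
  set B : ℝ := max 0 ((s : ℝ) - t) with hB
  have hbeta : ∀ k ∈ Finset.univ.erase ℓ, betaFun n t k I =
      B + (if k ∈ I then A - B else 0) := by
    intro k _
    by_cases hkI : k ∈ I
    · have hc : (I.erase k).card = s - 1 := Finset.card_erase_of_mem hkI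
      have hs1 : 1 ≤ s := Finset.card_pos.mpr ⟨k, hkI⟩
      have : ((I.erase k).card : ℝ) = (s : ℝ) - 1 := by
        rw [hc, Nat.cast_sub hs1]; norm_num
      simp only [betaFun, this, hkI, if_true]
      rw [hA]; ring_nf
    · simp [betaFun, Finset.erase_eq_of_notMem hkI, hkI, hB, hs]
  have hsum : (∑ k ∈ Finset.univ.erase ℓ, betaFun n t k I) =
      ((n : ℝ) - 1) * B + ((I.erase ℓ).card : ℝ) * (A - B) := by
    rw [Finset.sum_congr rfl hbeta, Finset.sum_add_distrib, Finset.sum_const,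
      Finset.sum_ite_mem]
    have h1 : (Finset.univ.erase ℓ).card = n - 1 := by
      rw [Finset.card_erase_of_mem (Finset.mem_univ ℓ), Finset.card_univ,
        Fintype.card_fin]
    have h2 : Finset.univ.erase ℓ ∩ I = I.erase ℓ := by
      ext x; simp [and_comm]
    rw [h1, h2, Finset.sum_const]
    have hn1 : ((n - 1 : ℕ) : ℝ) = (n : ℝ) - 1 := by
      have : 1 ≤ n := Nat.pos_of_ne_zero (by rintro rfl; exact ℓ.elim0)
      rw [Nat.cast_sub this]; norm_num
    simp [nsmul_eq_mul, hn1]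
  have hcerase : ((I.erase ℓ).card : ℝ) = (s : ℝ) - (if ℓ ∈ I then 1 else 0) := by
    by_cases hl : ℓ ∈ I
    · have hc : (I.erase ℓ).card = s - 1 := Finset.card_erase_of_mem hl
      have hs1 : 1 ≤ s := Finset.card_pos.mpr ⟨ℓ, hl⟩
      rw [hc, Nat.cast_sub hs1, if_pos hl]; norm_num
    · rw [Finset.erase_eq_of_notMem hl, if_neg hl]; norm_num [hs]
  have halpha1 : alphaFun n t I = B := rfl
  have halpha2 : alphaFun n (t + 1) I = A := by
    unfold alphaFun
    rw [hA]
    congr 1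
    push_cast
    ring
  rw [gammaFun, hsum, hcerase, halpha1, halpha2]
  set e : ℝ := if ℓ ∈ I then 1 else 0 with he
  have he01 : e = 0 ∨ e = 1 := by
    rw [he]; by_cases hl : ℓ ∈ I <;> simp [hl]
  rcases le_or_gt s t with hst | hst
  · have hstR : (s : ℝ) ≤ t := by exact_mod_cast hst
    have hA0 : A = 0 := max_eq_left (by linarith)
    have hB0 : B = 0 := max_eq_left (by linarith)
    have htgt : max 0 ((s : ℝ) + e - t - 1) = 0 := by
      apply max_eq_left
      rcases he01 with h | h <;> rw [h] <;> linarith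
    rw [hA0, hB0, htgt]; ring
  · have hstR : (t : ℝ) + 1 ≤ s := by exact_mod_cast hst
    have hAv : A = (s : ℝ) - 1 - t := max_eq_right (by linarith)
    have hBv : B = (s : ℝ) - t := max_eq_right (by linarith)
    have htgt : max 0 ((s : ℝ) + e - t - 1) = (s : ℝ) + e - t - 1 := by
      apply max_eq_right
      rcases he01 with h | h <;> rw [h] <;> linarith
    rw [hAv, hBv, htgt]; ring

/-- For `n ≥ 3`, `1 ≤ t ≤ n − 2` and `ℓ ∈ [n]`, the function `γ_{n,t,ℓ}` is
supermodular. -/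
theorem gammaFun_supermodular {n t : ℕ} (hn : 3 ≤ n) (ht : 1 ≤ t) (htn : t ≤ n - 2)
    (ℓ : Fin n) : Supermodular (gammaFun n t ℓ) := by
  classical
  intro I J
  rw [gamma_eq, gamma_eq, gamma_eq, gamma_eq]
  set a : Finset (Fin n) → ℝ :=
    fun K => (K.card : ℝ) + (if ℓ ∈ K then 1 else 0) with ha
  show max 0 (a I - t - 1) + max 0 (a J - t - 1) ≤
    max 0 (a (I ∩ J) - t - 1) + max 0 (a (I ∪ J) - t - 1)
  have hcard : ((I ∩ J).card : ℝ) + ((I ∪ J).card : ℝ) =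
      (I.card : ℝ) + (J.card : ℝ) := by
    exact_mod_cast congrArg (Nat.cast (R := ℝ)) (Finset.card_inter_add_card_union I J)
  have hind : (if ℓ ∈ I ∩ J then (1 : ℝ) else 0) + (if ℓ ∈ I ∪ J then (1 : ℝ) else 0) =
      (if ℓ ∈ I then (1 : ℝ) else 0) + (if ℓ ∈ J then (1 : ℝ) else 0) := by
    by_cases hI : ℓ ∈ I <;> by_cases hJ : ℓ ∈ J <;>
      simp [Finset.mem_inter, Finset.mem_union, hI, hJ]
  have hmod : a (I ∩ J) + a (I ∪ J) = a I + a J := by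
    simp only [ha]; linarith
  have h1 : a (I ∩ J) ≤ a I := by
    simp only [ha]
    have hc : ((I ∩ J).card : ℝ) ≤ (I.card : ℝ) := by
      exact_mod_cast Finset.card_le_card Finset.inter_subset_left
    have hi : (if ℓ ∈ I ∩ J then (1 : ℝ) else 0) ≤ (if ℓ ∈ I then (1 : ℝ) else 0) := by
      by_cases hI : ℓ ∈ I <;> by_cases hJ : ℓ ∈ J <;>
        simp [Finset.mem_inter, hI, hJ]
    linarith
  have h2 : a (I ∩ J) ≤ a J := by
    simp only [ha]
    have hc : ((I ∩ J).card : ℝ) ≤ (J.card : ℝ) := by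
      exact_mod_cast Finset.card_le_card Finset.inter_subset_right
    have hi : (if ℓ ∈ I ∩ J then (1 : ℝ) else 0) ≤ (if ℓ ∈ J then (1 : ℝ) else 0) := by
      by_cases hI : ℓ ∈ I <;> by_cases hJ : ℓ ∈ J <;>
        simp [Finset.mem_inter, hI, hJ]
    linarith
  set c : ℝ := (t : ℝ) + 1 with hc
  have e1 := max_choice 0 (a (I ∩ J) - t - 1)
  have e2 := max_choice 0 (a I - t - 1)
  have e3 := max_choice 0 (a J - t - 1)
  have e4 := max_choice 0 (a (I ∪ J) - t - 1)
  have g1 : a (I ∩ J) - t - 1 ≤ max 0 (a (I ∩ J) - t - 1) := le_max_right _ _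
  have g4 : a (I ∪ J) - t - 1 ≤ max 0 (a (I ∪ J) - t - 1) := le_max_right _ _
  have g1' : (0 : ℝ) ≤ max 0 (a (I ∩ J) - t - 1) := le_max_left _ _
  have g4' : (0 : ℝ) ≤ max 0 (a (I ∪ J) - t - 1) := le_max_left _ _
  rcases e1 with h | h <;> rcases e2 with h' | h' <;> rcases e3 with h'' | h'' <;>
    rcases e4 with h''' | h''' <;> rw [h', h''] <;> linarith
end
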